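/- Let d ≥ 1 be an integer, let w > 0, let c ∈ ℝ^d, and let ε_2, …, ε_d ∈ {−1, +1}. For u = 1, …, d let σ_u be the axis-aligned hypercube of width w centered at c + Σ_{v=2}^{u} ε_v·w·e_{v−1}, and set m = c + Σ_{v=2}^{d} ε_v·(w/2)·e_{v−1}. Let s ∈ {−1, +1}, set p = m + s·(w/2)·e_d, and let ε'_2, …, ε'_d ∈ {−1, +1}. For u = 1, …, d let σ'_u be the axis-aligned hypercube of width w/4 centered at p + Σ_{v=2}^{u} ε'_v·(w/4)·e_{v−1}. Then ⋃_{u=1}^{d} σ'_u ⊆ ⋂_{u=1}^{d} σ_u. -/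
import Mathlib

lemma sum_single_apply {d : ℕ} (n : ℕ) (a : Fin d → ℝ) (b : ℝ) (k : Fin d) :
    (∑ j : Fin d, if (j : ℕ) < n then a j • b • (Pi.single j (1:ℝ) : Fin d → ℝ) else 0) k
      = if (k : ℕ) < n then a k * b else 0 := by
  rw [Finset.sum_apply, Finset.sum_eq_single k]
  · by_cases h : (k:ℕ) < n <;> simp [h, smul_smul]
  · intro j _ hj
    by_cases h : (j:ℕ) < n <;> simp [h, Pi.single_eq_of_ne hj.symm]
  · simp

set_option maxHeartbeats 2000000 in
/-- Lemma 2(ii) (claim:lb_hyper): with `σ_u` the hypercubes of width `w` centered at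
`c + ∑_{j < u} ε_j • w • e_j`, `m = c + ∑_{j < d-1} ε_j • (w/2) • e_j`,
`p = m + s • (w/2) • e_{d-1}` (with `s = ±1`), and `σ'_u` the hypercubes of width
`w/4` centered at `p + ∑_{j < u} ε'_j • (w/4) • e_j`, the union of the `σ'_u` is
contained in the intersection of the `σ_u`. (Hypercubes are closed L∞ balls in
`Fin d → ℝ` with the sup metric.) -/
theorem stmt_3 (d : ℕ) (hd : 1 ≤ d) (w : ℝ) (hw : 0 < w) (c : Fin d → ℝ)
    (ε ε' : Fin d → ℝ) (hε : ∀ v, ε v = 1 ∨ ε v = -1)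
    (hε' : ∀ v, ε' v = 1 ∨ ε' v = -1) (s : ℝ) (hs : s = 1 ∨ s = -1) :
    let σ : Fin d → Set (Fin d → ℝ) := fun u =>
      Metric.closedBall
        (c + ∑ j : Fin d,
          if (j : ℕ) < (u : ℕ) then ε j • w • (Pi.single j 1 : Fin d → ℝ) else 0) w
    let m : Fin d → ℝ := c + ∑ j : Fin d,
      if (j : ℕ) < d - 1 then ε j • (w / 2) • (Pi.single j 1 : Fin d → ℝ) else 0
    let p : Fin d → ℝ :=
      m + s • (w / 2) • (Pi.single (⟨d - 1, by omega⟩ : Fin d) 1 : Fin d → ℝ)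
    let σ' : Fin d → Set (Fin d → ℝ) := fun u =>
      Metric.closedBall
        (p + ∑ j : Fin d,
          if (j : ℕ) < (u : ℕ) then ε' j • (w / 4) • (Pi.single j 1 : Fin d → ℝ) else 0)
        (w / 4)
    (⋃ u, σ' u) ⊆ ⋂ u, σ u := by
  intro σ m p σ' x hx
  simp only [Set.mem_iUnion] at hx
  obtain ⟨u', hu'⟩ := hx
  simp only [Set.mem_iInter]
  intro u
  rw [Metric.mem_closedBall] at hu' ⊢
  have hkey : dist
      (p + ∑ j : Fin d,
        if (j : ℕ) < (u' : ℕ) then ε' j • (w / 4) • (Pi.single j 1 : Fin d → ℝ) else 0)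
      (c + ∑ j : Fin d,
        if (j : ℕ) < (u : ℕ) then ε j • w • (Pi.single j 1 : Fin d → ℝ) else 0)
      ≤ 3 * w / 4 := by
    rw [dist_pi_le_iff (by linarith)]
    intro k
    have hk : (k : ℕ) < d := k.2
    have hu : (u : ℕ) < d := u.2
    have hu'2 : (u' : ℕ) < d := u'.2
    simp only [p, m, Pi.add_apply, Pi.smul_apply, sum_single_apply, smul_eq_mul]
    have hsingle : (Pi.single (⟨d - 1, by omega⟩ : Fin d) (1:ℝ) : Fin d → ℝ) k
        = if (k : ℕ) = d - 1 then 1 else 0 := by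
      rw [Pi.single_apply]
      congr 1
      simp [Fin.ext_iff, eq_comm]
    rw [hsingle, Real.dist_eq]
    rcases hε k with h1 | h1 <;> rcases hε' k with h2 | h2 <;> rcases hs with h3 | h3 <;>
      rw [h1, h2, h3, abs_le] <;>
      refine ⟨?_, ?_⟩ <;>
      (split_ifs <;> first | omega | linarith)
  calc dist x _ ≤ dist x (p + ∑ j : Fin d,
        if (j : ℕ) < (u' : ℕ) then ε' j • (w / 4) • (Pi.single j 1 : Fin d → ℝ) else 0)
        + _ := dist_triangle _ _ _
    _ ≤ w / 4 + 3 * w / 4 := add_le_add hu' hkey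
    _ = w := by ring
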